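/- arXiv:2012.01085 — 3 statements merged into one kernel-verified Lean document; each statement's English description precedes it below -/
import Mathlib

section
/- Let X and Y be d × d symmetric matrices over F_q with entries x_{i,j} = x_{j,i} and y_{i,j} = y_{j,i}. Define Z ∈ M(d, F_q) by Z_{i,j} = x_{i,j} + y_{i, j+1}, where the second index of y is taken modulo d. Then, when X and Y are sampled independently and uniformly at random from the space S(d,q) of symmetric matrices, Z is uniformly distributed on M(d, F_q). -/
open Matrix Finset

section Aux

variable {F : Type*} [Field F] [Fintype F] {d : ℕ} [NeZero d]

/-- equiv between symmetric matrices and functions on the upper triangle -/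
def symmEquiv : {X : Matrix (Fin d) (Fin d) F // X.IsSymm} ≃
    ({p : Fin d × Fin d // p.1 ≤ p.2} → F) where
  toFun X := fun t => X.1 t.1.1 t.1.2
  invFun f := ⟨Matrix.of fun i j =>
      if h : i ≤ j then f ⟨(i, j), h⟩ else f ⟨(j, i), le_of_not_ge h⟩, by
    ext i j
    simp only [transpose_apply, Matrix.of_apply]
    rcases le_total i j with h | h
    · rcases le_total j i with h' | h'
      · have : i = j := le_antisymm h h'
        subst this; simp
      · rw [dif_pos h]
        by_cases h2 : j ≤ i
        · rw [dif_pos h2]; have : i = j := le_antisymm h h2; subst this; rfl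
        · rw [dif_neg h2]
    · rw [dif_pos h]
      by_cases h2 : i ≤ j
      · rw [dif_pos h2]; have : i = j := le_antisymm h2 h; subst this; rfl
      · rw [dif_neg h2]⟩
  left_inv := by
    rintro ⟨X, hX⟩
    ext i j
    simp only [Matrix.of_apply]
    split_ifs with h
    · rfl
    · exact hX.apply i j
  right_inv := by
    intro f
    funext t
    obtain ⟨⟨i, j⟩, h⟩ := t
    simp [h]

lemma card_triangle : Fintype.card {p : Fin d × Fin d // p.1 ≤ p.2} +
    Fintype.card {p : Fin d × Fin d // p.1 ≤ p.2} = d * d + d := by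
  classical
  set A : Finset (Fin d × Fin d) := univ.filter fun p => p.1 ≤ p.2 with hA
  set B : Finset (Fin d × Fin d) := univ.filter fun p => p.2 ≤ p.1 with hB
  have hcard : Fintype.card {p : Fin d × Fin d // p.1 ≤ p.2} = A.card :=
    Fintype.card_subtype _
  have hAB : A.card = B.card := by
    apply Finset.card_bij (fun p _ => p.swap)
    · intro p hp
      simp only [hA, hB, mem_filter, mem_univ, true_and] at hp ⊢
      exact hp
    · intro p _ q _ h
      simpa [Prod.ext_iff] using congrArg Prod.swap h
    · intro p hp
      refine ⟨p.swap, ?_, by simp⟩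
      simp only [hA, hB, mem_filter, mem_univ, true_and] at hp ⊢
      exact hp
  have hU : A ∪ B = univ := by
    ext p
    simp only [hA, hB, mem_union, mem_filter, mem_univ, true_and, iff_true]
    exact le_total p.1 p.2
  have hI : A ∩ B = univ.filter fun p : Fin d × Fin d => p.1 = p.2 := by
    ext p
    simp only [hA, hB, mem_inter, mem_filter, mem_univ, true_and]
    constructor
    · rintro ⟨h1, h2⟩; exact le_antisymm h1 h2
    · rintro h; exact ⟨le_of_eq h, le_of_eq h.symm⟩
  have hdiag : (univ.filter fun p : Fin d × Fin d => p.1 = p.2).card = d := by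
    rw [show (univ.filter fun p : Fin d × Fin d => p.1 = p.2) =
        (univ : Finset (Fin d)).image (fun i => (i, i)) by
      ext p
      simp only [mem_filter, mem_univ, true_and, mem_image]
      constructor
      · intro h; exact ⟨p.1, by simp [Prod.ext_iff, h]⟩
      · rintro ⟨a, _, rfl⟩; rfl]
    rw [Finset.card_image_of_injective _ (fun a b h => (Prod.ext_iff.mp h).1)]
    simp
  have key := Finset.card_union_add_card_inter A B
  rw [hU, hI, hdiag] at key
  rw [hcard]
  calc A.card + A.card = A.card + B.card := by rw [hAB]
    _ = d * d + d := by
        rw [← key]; congr 1; simp [Fintype.card_prod]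

lemma card_pairs : Nat.card ({X : Matrix (Fin d) (Fin d) F // X.IsSymm} ×
      {Y : Matrix (Fin d) (Fin d) F // Y.IsSymm}) =
    Nat.card (Matrix (Fin d) (Fin d) F × (Fin d → F)) := by
  have h1 : Nat.card {X : Matrix (Fin d) (Fin d) F // X.IsSymm} =
      Nat.card F ^ Fintype.card {p : Fin d × Fin d // p.1 ≤ p.2} := by
    rw [Nat.card_congr (symmEquiv), Nat.card_fun]
    simp [Nat.card_eq_fintype_card]
  have h2 : Nat.card (Matrix (Fin d) (Fin d) F) = Nat.card F ^ (d * d) := by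
    have : Nat.card (Matrix (Fin d) (Fin d) F) = Nat.card (Fin d → Fin d → F) := rfl
    rw [this, Nat.card_fun, Nat.card_fun, ← pow_mul]
    simp [Nat.card_eq_fintype_card, mul_comm]
  have h3 : Nat.card (Fin d → F) = Nat.card F ^ d := by
    rw [Nat.card_fun]
    simp [Nat.card_eq_fintype_card]
  rw [Nat.card_prod, Nat.card_prod, h1, h2, h3, ← pow_add, ← pow_add, card_triangle]

end Aux

section Main

variable {F : Type*} [Field F] [Fintype F] {d : ℕ} [NeZero d]

open Fin.NatCast in
omit [Field F] [Fintype F] in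
lemma antidiag_const {Y : Matrix (Fin d) (Fin d) F}
    (h : ∀ i j, Y (i + 1) j = Y i (j + 1)) : ∀ a b, Y a b = Y 0 (a + b) := by
  have key : ∀ n : ℕ, ∀ b, Y (n : Fin d) b = Y 0 ((n : Fin d) + b) := by
    intro n
    induction n with
    | zero => intro b; simp
    | succ n ih =>
      intro b
      have hc : ((n + 1 : ℕ) : Fin d) = (n : Fin d) + 1 := by push_cast; ring
      rw [hc, h, ih, add_assoc, add_comm 1 b]
  intro a b
  have := key a.val b
  rwa [Fin.cast_val_eq_self] at this

/-- The key map: (X, Y) ↦ (Z, first row of Y). -/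
def Phi : {p : Matrix (Fin d) (Fin d) F × Matrix (Fin d) (Fin d) F //
      p.1.IsSymm ∧ p.2.IsSymm} → Matrix (Fin d) (Fin d) F × (Fin d → F) :=
  fun p => (Matrix.of fun i j => p.1.1 i j + p.1.2 i (j + 1), fun s => p.1.2 0 s)

lemma Phi_injective : Function.Injective (Phi (F := F) (d := d)) := by
  rintro ⟨⟨X₁, Y₁⟩, hX₁, hY₁⟩ ⟨⟨X₂, Y₂⟩, hX₂, hY₂⟩ heq
  simp only [Phi, Prod.mk.injEq] at heq
  obtain ⟨hZ, hrow⟩ := heq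
  have h1 : ∀ i j, X₁ i j + Y₁ i (j + 1) = X₂ i j + Y₂ i (j + 1) := by
    intro i j
    exact congrFun (congrFun hZ i) j
  have h2 : ∀ s, Y₁ 0 s = Y₂ 0 s := fun s => congrFun hrow s
  set Y : Matrix (Fin d) (Fin d) F := Y₁ - Y₂ with hYdef
  set X : Matrix (Fin d) (Fin d) F := X₂ - X₁ with hXdef
  have hY : Y.IsSymm := hY₁.sub hY₂
  have hX : X.IsSymm := hX₂.sub hX₁
  have hkey : ∀ i j, X i j = Y i (j + 1) := by
    intro i j
    simp only [hYdef, hXdef, Matrix.sub_apply]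
    linear_combination -h1 i j
  have hrel : ∀ i j, Y (i + 1) j = Y i (j + 1) := by
    intro i j
    calc Y (i + 1) j = Y j (i + 1) := hY.apply j (i + 1)
      _ = X j i := (hkey j i).symm
      _ = X i j := hX.apply i j
      _ = Y i (j + 1) := hkey i j
  have hY0 : ∀ s, Y 0 s = 0 := by
    intro s; simp [hYdef, Matrix.sub_apply, h2 s]
  have hYzero : Y = 0 := by
    ext a b
    rw [antidiag_const hrel a b, hY0]
    rfl
  have hXzero : X = 0 := by
    ext i j
    rw [hkey i j, hYzero]
    rfl
  have e1 : Y₁ = Y₂ := by rwa [hYdef, sub_eq_zero] at hYzero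
  have e2 : X₁ = X₂ := by
    have := hXzero
    rw [hXdef, sub_eq_zero] at this
    exact this.symm
  exact Subtype.ext (Prod.ext e2 e1)

lemma Phi_bijective : Function.Bijective (Phi (F := F) (d := d)) := by
  refine (Nat.bijective_iff_injective_and_card _).mpr ⟨Phi_injective, ?_⟩
  rw [Nat.card_congr (Equiv.subtypeProdEquivProd), card_pairs]

end Main

theorem shifted_sum_of_random_symmetric_matrices_is_uniform
    {F : Type*} [Field F] [Fintype F] {d : ℕ} [NeZero d]
    (M : Matrix (Fin d) (Fin d) F) :
    Nat.card {p : Matrix (Fin d) (Fin d) F × Matrix (Fin d) (Fin d) F //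
        p.1.IsSymm ∧ p.2.IsSymm ∧ ∀ i j, M i j = p.1 i j + p.2 i (j + 1)} *
      Nat.card (Matrix (Fin d) (Fin d) F) =
    Nat.card {X : Matrix (Fin d) (Fin d) F // X.IsSymm} *
      Nat.card {Y : Matrix (Fin d) (Fin d) F // Y.IsSymm} := by

  classical
  -- fiber ≃ {w // (Phi w).1 = M}
  have e1 : {p : Matrix (Fin d) (Fin d) F × Matrix (Fin d) (Fin d) F //
        p.1.IsSymm ∧ p.2.IsSymm ∧ ∀ i j, M i j = p.1 i j + p.2 i (j + 1)} ≃
      {w : {p : Matrix (Fin d) (Fin d) F × Matrix (Fin d) (Fin d) F //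
        p.1.IsSymm ∧ p.2.IsSymm} // (Phi w).1 = M} :=
    { toFun := fun p => ⟨⟨p.1, p.2.1, p.2.2.1⟩, by
        ext i j; exact (p.2.2.2 i j).symm⟩
      invFun := fun w => ⟨w.1.1, w.1.2.1, w.1.2.2, fun i j =>
        (congrFun (congrFun w.2 i) j).symm⟩
      left_inv := fun p => rfl
      right_inv := fun w => rfl }
  have e2 : {w : {p : Matrix (Fin d) (Fin d) F × Matrix (Fin d) (Fin d) F //
        p.1.IsSymm ∧ p.2.IsSymm} // (Phi w).1 = M} ≃
      {v : Matrix (Fin d) (Fin d) F × (Fin d → F) // v.1 = M} :=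
    Equiv.subtypeEquiv (Equiv.ofBijective Phi Phi_bijective) (fun w => Iff.rfl)
  have e3 : {v : Matrix (Fin d) (Fin d) F × (Fin d → F) // v.1 = M} ≃ (Fin d → F) :=
    { toFun := fun v => v.1.2
      invFun := fun c => ⟨(M, c), rfl⟩
      left_inv := by rintro ⟨⟨v1, v2⟩, rfl⟩; rfl
      right_inv := fun c => rfl }
  rw [Nat.card_congr (e1.trans (e2.trans e3)), mul_comm, ← Nat.card_prod,
    ← card_pairs, Nat.card_prod]
end

section
/- The linear map Φ : S(d,F) ⊕ S(d,F) → M(d,F) defined by Φ(X,Y)_{i,j} = X_{i,j} + Y_{i, (j mod d) + 1} (where Y is indexed symmetrically) is surjective for every field F and every d ≥ 1. -/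
/-!
Put `W i j = Y i (j + 1)` and `A = Mᵀ - M`. The theorem asks for a `W` with
`W i j - W j i = -A i j` (so that `M - W` is symmetric) which is invariant under
`(i, j) ↦ (j + 1, i - 1)` (so that `Y` is symmetric). Both maps preserve the anti-diagonals
`i + j = s`, and on each of them the partial sums `W i j = ∑_{k < i} A k (s - k)` work: the
required identities reduce to sums of `A k (s - k)` over intervals symmetric under `k ↦ s - k`,
which vanish because `A` is alternating, so the terms cancel in pairs and a middle term lies
on the diagonal.
-/

open Matrix Finset
open Fin.CommRing

section

variable {F : Type*} [AddCommGroup F] {d : ℕ} [NeZero d]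

def antidiagPotential (A : Matrix (Fin d) (Fin d) F) (i j : Fin d) : F :=
  ∑ k ∈ range i.val, A k (i + j - k)

variable {A : Matrix (Fin d) (Fin d) F}

theorem sum_Ico_antidiag_eq_zero (hA : ∀ i j, A j i = -A i j) (hA₀ : ∀ i, A i i = 0)
    {s : Fin d} {a b : ℕ} (hs : ((a + b : ℕ) : Fin d) = s + 1) :
    ∑ k ∈ Ico a b, A k (s - k) = 0 := by
  have hcast {k : ℕ} (hk : k ∈ Ico a b) : ((a + b - 1 - k : ℕ) : Fin d) = s - k := by
    rw [mem_Ico] at hk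
    rw [Nat.cast_sub (by omega), Nat.cast_sub (by omega), hs]
    ring
  refine sum_involution (fun k _ ↦ a + b - 1 - k) (fun k hk ↦ ?_) (fun k hk hne heq ↦ ?_)
    (fun k hk ↦ by simp only [mem_Ico] at hk ⊢; omega)
    (fun k hk ↦ by simp only [mem_Ico] at hk; omega)
  · rw [hcast hk, sub_sub_cancel, hA, neg_add_cancel]
  · have hfixed := hcast hk
    rw [heq] at hfixed
    rw [← hfixed, hA₀] at hne
    exact hne rfl

theorem sum_range_antidiag_eq (hA : ∀ i j, A j i = -A i j) (hA₀ : ∀ i, A i i = 0)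
    {s : Fin d} {a b : ℕ} (hs : ((a + b : ℕ) : Fin d) = s + 1) :
    ∑ k ∈ range a, A k (s - k) = ∑ k ∈ range b, A k (s - k) := by
  wlog hab : a ≤ b generalizing a b
  · exact (this (by rwa [add_comm]) (by omega)).symm
  rw [← sum_range_add_sum_Ico _ hab, sum_Ico_antidiag_eq_zero hA hA₀ hs, add_zero]

theorem antidiagPotential_sub_swap (hA : ∀ i j, A j i = -A i j) (hA₀ : ∀ i, A i i = 0)
    (i j : Fin d) : antidiagPotential A i j - antidiagPotential A j i = A j i := by
  wlog hij : i.val ≤ j.val generalizing i j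
  · rw [← neg_sub, this j i (by omega), hA, neg_neg]
  unfold antidiagPotential
  rw [add_comm j i, ← sum_range_add_sum_Ico _ hij, sub_add_cancel_left, neg_eq_iff_eq_neg]
  rcases hij.eq_or_lt with hij | hij
  · rw [Fin.ext hij, Ico_self, sum_empty, hA₀, neg_zero]
  rw [sum_eq_sum_Ico_succ_bot hij, sum_Ico_antidiag_eq_zero hA hA₀ (by push_cast; ring),
    add_zero, Fin.cast_val_eq_self, add_sub_cancel_left, hA]

theorem antidiagPotential_sub_one_comm (hA : ∀ i j, A j i = -A i j) (hA₀ : ∀ i, A i i = 0)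
    (i j : Fin d) : antidiagPotential A i (j - 1) = antidiagPotential A j (i - 1) := by
  unfold antidiagPotential
  rw [show j + (i - 1) = i + (j - 1) by ring]
  exact sum_range_antidiag_eq hA hA₀ (by push_cast; ring)

end

theorem shifted_sum_of_symmetric_matrices_surjective
    {F : Type*} [Field F] {d : ℕ} [NeZero d]
    (M : Matrix (Fin d) (Fin d) F) :
    ∃ X Y : Matrix (Fin d) (Fin d) F, X.IsSymm ∧ Y.IsSymm ∧
      ∀ i j, M i j = X i j + Y i (j + 1) := by
  have hA : ∀ i j, (Mᵀ - M) j i = -(Mᵀ - M) i j := fun i j ↦ (neg_sub _ _).symm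
  have hA₀ : ∀ i, (Mᵀ - M) i i = 0 := fun i ↦ sub_self (M i i)
  set W : Matrix (Fin d) (Fin d) F := antidiagPotential (Mᵀ - M)
  refine ⟨M - W, fun i j ↦ W i (j - 1), ?_, ?_, fun i j ↦ ?_⟩
  · ext i j
    have hskew := antidiagPotential_sub_swap hA hA₀ i j
    simp only [transpose_apply, Matrix.sub_apply] at hskew ⊢
    linear_combination hskew
  · ext i j
    exact antidiagPotential_sub_one_comm hA hA₀ j i
  · simp only [Matrix.sub_apply, add_sub_cancel_right, sub_add_cancel]
end

section
/- Let A : F^n × F^n × F^m → F be a trilinear map with A(x,y,z) = −A(y,x,z) for all x,y,z (alternating in the first two arguments). Define the trilinear form à on F^{n+m} by Ã((x^{(1)},x^{(2)}), (y^{(1)},y^{(2)}), (z^{(1)},z^{(2)})) = A(x^{(1)}, z^{(1)}, y^{(2)}) + A(z^{(1)}, y^{(1)}, x^{(2)}) − A(x^{(1)}, y^{(1)}, z^{(2)}). Then à is an alternating trilinear form on F^{n+m}, i.e., Ã(u,v,w) changes sign under swapping any two of its arguments. -/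
theorem tilde_construction_is_alternating
    {F : Type*} [Field F] {n m : ℕ}
    (A : (Fin n → F) → (Fin n → F) → (Fin m → F) → F)
    (htri1 : ∀ (c : F) (x x' y z), A (c • x + x') y z = c * A x y z + A x' y z)
    (htri2 : ∀ (c : F) (x y y' z), A x (c • y + y') z = c * A x y z + A x y' z)
    (htri3 : ∀ (c : F) (x y z z'), A x y (c • z + z') = c * A x y z + A x y z')
    (hskew : ∀ x y z, A x y z = -A y x z)
    (halt : ∀ x z, A x x z = 0)
    (Atil : ((Fin n → F) × (Fin m → F)) → ((Fin n → F) × (Fin m → F)) →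
      ((Fin n → F) × (Fin m → F)) → F)
    (hAtil : ∀ x y z, Atil x y z = A x.1 z.1 y.2 + A z.1 y.1 x.2 - A x.1 y.1 z.2) :
    (∀ u v w, Atil u v w = -Atil v u w) ∧
    (∀ u v w, Atil u v w = -Atil u w v) ∧
    (∀ u v w, Atil u v w = -Atil w v u) ∧
    (∀ u w, Atil u u w = 0) ∧ (∀ u w, Atil u w u = 0) ∧ (∀ u w, Atil w u u = 0) := by
  refine ⟨?_, ?_, ?_, ?_, ?_, ?_⟩
  · intro u v w
    simp only [hAtil]
    linear_combination hskew v.1 w.1 u.2 + hskew w.1 u.1 v.2 - hskew v.1 u.1 w.2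
  · intro u v w
    simp only [hAtil]
    linear_combination hskew v.1 w.1 u.2
  · intro u v w
    simp only [hAtil]
    linear_combination hskew u.1 w.1 v.2
  · intro u w
    simp only [hAtil]
    linear_combination hskew u.1 w.1 u.2 - halt u.1 w.2
  · intro u w
    simp only [hAtil]
    linear_combination halt u.1 w.2
  · intro u w
    simp only [hAtil]
    linear_combination halt u.1 w.2
end
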